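/- arXiv:2110.08755 — 3 statements merged into one kernel-verified Lean document; each statement's English description precedes it below -/
import Mathlib

section
/- Let n(t) := (cos t, sin t, 0) and fix κ² > 0. Define c_κ² := 1 if κ² ≥ 3, and c_κ² := (κ² − √(κ⁴ + 16) + 4)/2 if 0 < κ² ≤ 3. Then for every C¹ 2π-periodic u : ℝ → ℝ³, ∫_{−π}^{π} |u'(t)|² dt + κ² ∫_{−π}^{π} |u(t) × n(t)|² dt ≥ c_κ² ∫_{−π}^{π} |u(t)|² dt. -/
open Real Set MeasureTheory

/-- Squared Euclidean norm of a vector in `ℝ³`. -/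
noncomputable def sq3 (v : Fin 3 → ℝ) : ℝ := v 0 ^ 2 + v 1 ^ 2 + v 2 ^ 2

/-- The outward unit normal `n(t) = (cos t, sin t, 0)` to the unit circle. -/
noncomputable def nvec (t : ℝ) : Fin 3 → ℝ := ![Real.cos t, Real.sin t, 0]

/-- The optimal Poincaré constant `c_κ²`. -/
noncomputable def poincareConst (κ : ℝ) : ℝ :=
  if 3 ≤ κ ^ 2 then 1 else (κ ^ 2 - Real.sqrt (κ ^ 4 + 16) + 4) / 2

/-!
The vertical component `u₂` contributes `|u₂'|² + κ² u₂² ≥ c u₂²` pointwise since `c < κ²`.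
The horizontal part is encoded as `z = u₀ + i u₁ : ℝ → ℂ`, and `u × n` has horizontal part
`Im (e^{-it} z)`. With `F` the Fourier coefficients of `z` on `[-π, π]`, Parseval turns the
inequality into `c ∑ |F n|² ≤ ∑ n² |F n|² + κ²/4 ∑ |F (n+1) - conj F (1-n)|²`, which is checked
on each pair of modes `n + 1, 1 - n`: it reduces to a `2 × 2` quadratic form being positive
semidefinite, i.e. `(κ²/2)² ≤ ((n+1)² + g) ((n-1)² + g)` with `g = κ²/2 - c`. The worst pairs
are `n = 0` (giving `c ≤ 1`) and `n = ±1` (giving `(κ²/2)² ≤ g (g + 4)`).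
-/

open Complex AddCircle ComplexConjugate
open scoped Interval

theorem ContinuousOn.memLp_restrict_Ioc {E : Type*} [NormedAddCommGroup E] {a b : ℝ}
    {f : ℝ → E} (hf : ContinuousOn f (Icc a b)) (p : ENNReal) :
    MemLp f p (volume.restrict (Ioc a b)) := by
  obtain ⟨C, hC⟩ := isCompact_Icc.exists_bound_of_continuousOn hf
  exact MemLp.of_bound ((hf.mono Ioc_subset_Icc_self).aestronglyMeasurable measurableSet_Ioc) C
    (ae_restrict_of_forall_mem measurableSet_Ioc fun x hx => hC x (Ioc_subset_Icc_self hx))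

section FourierCoeffOn

variable {a b : ℝ} (hab : a < b)

theorem fourierCoeffOn_conj (f : ℝ → ℂ) (n : ℤ) :
    fourierCoeffOn hab (fun x => conj (f x)) n = conj (fourierCoeffOn hab f (-n)) := by
  simp only [fourierCoeffOn_eq_integral, intervalIntegral.integral_of_le hab.le, neg_neg,
    Complex.real_smul, map_mul, conj_ofReal, ← integral_conj, smul_eq_mul, fourier_neg]

theorem fourierCoeffOn_ofReal_im {f : ℝ → ℂ} (hf : IntervalIntegrable f volume a b) (n : ℤ) :
    fourierCoeffOn hab (fun x => ((f x).im : ℂ)) n =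
      (fourierCoeffOn hab f n - conj (fourierCoeffOn hab f (-n))) / (2 * I) := by
  have hfc : IntervalIntegrable (fun x => conj (f x)) volume a b :=
    ⟨conjCLE.toContinuousLinearMap.integrable_comp hf.1,
      conjCLE.toContinuousLinearMap.integrable_comp hf.2⟩
  have hint : ∀ g : ℝ → ℂ, IntervalIntegrable g volume a b → IntervalIntegrable
      (fun x => fourier (-n) (x : AddCircle (b - a)) • g x) volume a b := fun g hg =>
    hg.continuousOn_mul
      ((map_continuous (fourier (-n))).comp (AddCircle.continuous_mk' _)).continuousOn
  rw [← fourierCoeffOn_conj]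
  simp only [fourierCoeffOn_eq_integral]
  rw [← smul_sub, ← intervalIntegral.integral_sub (hint f hf) (hint _ hfc), smul_div_assoc,
    ← intervalIntegral.integral_div]
  simp only [im_eq_sub_conj, smul_eq_mul, mul_sub, sub_div, mul_div_assoc]

theorem fourierCoeffOn_fourier_mul (f : ℝ → ℂ) (m n : ℤ) :
    fourierCoeffOn hab (fun x => fourier m (x : AddCircle (b - a)) * f x) n =
      fourierCoeffOn hab f (n - m) := by
  simp only [fourierCoeffOn_eq_integral, smul_eq_mul, ← mul_assoc, ← fourier_add]
  congr 3 with x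
  ring_nf

theorem fourierCoeffOn_deriv {f f' : ℝ → ℂ} (hf : ∀ x ∈ [[a, b]], HasDerivAt f (f' x) x)
    (hf' : IntervalIntegrable f' volume a b) (hper : f b = f a) (n : ℤ) :
    fourierCoeffOn hab f' n = 2 * π * I * n / (b - a) * fourierCoeffOn hab f n := by
  rcases eq_or_ne n 0 with rfl | hn
  · simp [fourierCoeffOn_eq_integral, intervalIntegral.integral_eq_sub_of_hasDerivAt hf hf', hper]
  · rw [fourierCoeffOn_of_hasDerivAt hab hn hf hf', hper, sub_self, mul_zero, zero_sub]
    have : (b : ℂ) - a ≠ 0 := sub_ne_zero.2 (by exact_mod_cast hab.ne')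
    field_simp

end FourierCoeffOn

theorem two_mul_mul_le_of_sq_le_mul {α β k x y : ℝ} (hα : 0 < α) (h : k ^ 2 ≤ α * β) :
    2 * k * x * y ≤ α * x ^ 2 + β * y ^ 2 := by
  have : 0 ≤ α * (α * x ^ 2 + β * y ^ 2 - 2 * k * x * y) := by
    nlinarith [sq_nonneg (α * x - k * y), mul_nonneg (sub_nonneg.2 h) (sq_nonneg y)]
  nlinarith [nonneg_of_mul_nonneg_right this hα]

theorem mul_le_add_mul_of_hasSum {κ c S₀ S₁ S₂ : ℝ} {F : ℤ → ℂ} (hc : c < κ ^ 2 / 2)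
    (hmode : ∀ n : ℤ,
      (κ ^ 2 / 2) ^ 2 ≤ ((n + 1) ^ 2 + (κ ^ 2 / 2 - c)) * ((n - 1) ^ 2 + (κ ^ 2 / 2 - c)))
    (h₀ : HasSum (fun n => ‖F n‖ ^ 2) S₀)
    (h₁ : HasSum (fun n : ℤ => (n : ℝ) ^ 2 * ‖F n‖ ^ 2) S₁)
    (h₂ : HasSum (fun n : ℤ => ‖F (n + 1) - conj (F (1 - n))‖ ^ 2 / 4) S₂) :
    c * S₀ ≤ S₁ + κ ^ 2 * S₂ := by
  -- Reindexing by `n ↦ n + 1` and by `n ↦ 1 - n` lets the modes `n + 1` and `1 - n` be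
  -- estimated together, against half of the diagonal sum each.
  have hdiag := h₁.sub (h₀.mul_left c)
  have hplus := (Equiv.addRight (1 : ℤ)).hasSum_iff.2 hdiag
  have hminus := (Equiv.subLeft (1 : ℤ)).hasSum_iff.2 hdiag
  have hsum := ((hplus.add hminus).div_const 2).add (h₂.mul_left (κ ^ 2))
  suffices 0 ≤ (S₁ - c * S₀ + (S₁ - c * S₀)) / 2 + κ ^ 2 * S₂ by linarith
  refine hsum.nonneg fun n => ?_
  have hXY : (‖F (n + 1)‖ - ‖F (1 - n)‖) ^ 2 ≤ ‖F (n + 1) - conj (F (1 - n))‖ ^ 2 := by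
    rw [← sq_abs, ← Complex.norm_conj (F (1 - n))]
    exact pow_le_pow_left₀ (abs_nonneg _) (abs_norm_sub_norm_le _ _) 2
  have hmix := two_mul_mul_le_of_sq_le_mul (x := ‖F (n + 1)‖) (y := ‖F (1 - n)‖)
    (by positivity) (hmode n)
  simp only [Function.comp_apply, Equiv.coe_addRight, Equiv.subLeft_apply]
  push_cast
  nlinarith

namespace poincareConst

theorem le_one (κ : ℝ) : poincareConst κ ≤ 1 := by
  unfold poincareConst
  split_ifs with h
  · rfl
  · have : κ ^ 2 + 2 ≤ √(κ ^ 4 + 16) := Real.le_sqrt_of_sq_le (by nlinarith)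
    linarith

theorem lt_half_sq {κ : ℝ} (hκ : 0 < κ ^ 2) : poincareConst κ < κ ^ 2 / 2 := by
  unfold poincareConst
  split_ifs with h
  · linarith
  · have : 4 < √(κ ^ 4 + 16) := Real.lt_sqrt_of_sq_lt (by nlinarith)
    linarith

/-- For `κ² ≤ 3` this is an equality, which is where the formula for `c_κ²` comes from. -/
theorem sq_half_sq_le (κ : ℝ) :
    (κ ^ 2 / 2) ^ 2 ≤ (κ ^ 2 / 2 - poincareConst κ) * (κ ^ 2 / 2 - poincareConst κ + 4) := by
  unfold poincareConst
  split_ifs with h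
  · nlinarith
  · have := Real.sq_sqrt (by positivity : (0 : ℝ) ≤ κ ^ 4 + 16)
    nlinarith

theorem mode_bound {κ : ℝ} (hκ : 0 < κ ^ 2) (n : ℤ) :
    (κ ^ 2 / 2) ^ 2 ≤ ((n + 1) ^ 2 + (κ ^ 2 / 2 - poincareConst κ)) *
      ((n - 1) ^ 2 + (κ ^ 2 / 2 - poincareConst κ)) := by
  have hg := sub_pos.2 (lt_half_sq hκ)
  have h4 := sq_half_sq_le κ
  rcases eq_or_ne n 0 with rfl | hn
  · have h1 : κ ^ 2 / 2 ≤ 1 + (κ ^ 2 / 2 - poincareConst κ) := by linarith [le_one κ]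
    have := pow_le_pow_left₀ (by positivity) h1 2
    push_cast
    linarith
  · have hn1 : 1 ≤ (n : ℝ) ^ 2 := by
      rw [← sq_abs]
      exact one_le_pow₀ (by exact_mod_cast Int.one_le_abs hn)
    set g := κ ^ 2 / 2 - poincareConst κ
    have : ((n + 1) ^ 2 + g) * ((n - 1) ^ 2 + g) - g * (g + 4) =
        ((n : ℝ) ^ 2 - 1) * ((n : ℝ) ^ 2 - 1 + 2 * g) := by ring
    nlinarith [mul_nonneg (sub_nonneg.2 hn1) (by linarith : (0 : ℝ) ≤ (n : ℝ) ^ 2 - 1 + 2 * g)]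

end poincareConst

theorem Real.neg_pi_lt_pi : -π < π := by linarith [pi_pos]

theorem hasSum_sq_mul_sq_fourierCoeffOn_of_hasDerivAt {z z' : ℝ → ℂ}
    (hz : ∀ t ∈ [[-π, π]], HasDerivAt z (z' t) t) (hz' : ContinuousOn z' [[-π, π]])
    (hper : z π = z (-π)) :
    HasSum (fun n : ℤ => (n : ℝ) ^ 2 * ‖fourierCoeffOn neg_pi_lt_pi z n‖ ^ 2)
      ((π - -π)⁻¹ • ∫ t in (-π)..π, ‖z' t‖ ^ 2) := by
  have hderiv := fourierCoeffOn_deriv neg_pi_lt_pi hz hz'.intervalIntegrable hper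
  rw [uIcc_of_le neg_pi_lt_pi.le] at hz'
  convert hasSum_sq_fourierCoeffOn neg_pi_lt_pi (hz'.memLp_restrict_Ioc 2) using 2 with n
  have : 2 * π * I * n / ((π : ℂ) - ((-π : ℝ) : ℂ)) = n * I := by
    field_simp
    push_cast
    ring
  rw [hderiv, this, norm_mul, norm_mul, norm_I, mul_one, norm_intCast, mul_pow, sq_abs]

theorem hasSum_sq_fourierCoeffOn_im_exp_neg_mul {z : ℝ → ℂ} (hz : ContinuousOn z [[-π, π]]) :
    HasSum (fun n : ℤ => ‖fourierCoeffOn neg_pi_lt_pi z (n + 1) -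
        conj (fourierCoeffOn neg_pi_lt_pi z (1 - n))‖ ^ 2 / 4)
      ((π - -π)⁻¹ • ∫ t in (-π)..π, (exp (-(t * I)) * z t).im ^ 2) := by
  have hrot : ∀ t : ℝ, fourier (-1) (t : AddCircle (π - -π)) = exp (-(t * I)) := by
    intro t
    rw [fourier_coe_apply]
    congr 1
    push_cast
    field_simp
    ring
  rw [uIcc_of_le neg_pi_lt_pi.le] at hz
  set v : ℝ → ℂ := fun t => fourier (-1) (t : AddCircle (π - -π)) * z t
  have hv : ContinuousOn v (Icc (-π) π) :=
    ((map_continuous (fourier (-1))).comp (AddCircle.continuous_mk' _)).continuousOn.mul hz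
  have h := hasSum_sq_fourierCoeffOn neg_pi_lt_pi
    (ContinuousOn.memLp_restrict_Ioc (f := fun t => ((v t).im : ℂ)) (by fun_prop) 2)
  rw [funext (fourierCoeffOn_ofReal_im neg_pi_lt_pi (hv.intervalIntegrable_of_Icc
    neg_pi_lt_pi.le))] at h
  simp only [v, fourierCoeffOn_fourier_mul] at h
  convert h using 2 with n
  · rw [sub_neg_eq_add, sub_neg_eq_add, neg_add_eq_sub, norm_div, norm_mul, norm_I, div_pow]
    norm_num
  · refine intervalIntegral.integral_congr fun t _ => ?_
    simp only [hrot, norm_real, Real.norm_eq_abs, sq_abs]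

theorem planar_poincare {κ : ℝ} (hκ : 0 < κ ^ 2) {z z' : ℝ → ℂ}
    (hz : ∀ t ∈ [[-π, π]], HasDerivAt z (z' t) t) (hz' : ContinuousOn z' [[-π, π]])
    (hper : z π = z (-π)) :
    poincareConst κ * ∫ t in (-π)..π, ‖z t‖ ^ 2 ≤
      (∫ t in (-π)..π, ‖z' t‖ ^ 2) + κ ^ 2 * ∫ t in (-π)..π, (exp (-(t * I)) * z t).im ^ 2 := by
  have hzc : ContinuousOn z [[-π, π]] := fun t ht => (hz t ht).continuousAt.continuousWithinAt
  have key := mul_le_add_mul_of_hasSum (poincareConst.lt_half_sq hκ)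
    (poincareConst.mode_bound hκ)
    (hasSum_sq_fourierCoeffOn neg_pi_lt_pi
      ((uIcc_of_le neg_pi_lt_pi.le ▸ hzc).memLp_restrict_Ioc 2))
    (hasSum_sq_mul_sq_fourierCoeffOn_of_hasDerivAt hz hz' hper)
    (hasSum_sq_fourierCoeffOn_im_exp_neg_mul hzc)
  simp only [smul_eq_mul] at key
  refine le_of_mul_le_mul_left ?_ (inv_pos.2 (sub_pos.2 neg_pi_lt_pi))
  linear_combination key

noncomputable def planarPart : (Fin 3 → ℝ) →L[ℝ] ℂ :=
  equivRealProdCLM.symm.toContinuousLinearMap ∘L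
    ((ContinuousLinearMap.proj 0).prod (ContinuousLinearMap.proj 1))

theorem planarPart_apply (v : Fin 3 → ℝ) : planarPart v = ⟨v 0, v 1⟩ := rfl

theorem sq3_eq_norm_sq_planarPart_add (v : Fin 3 → ℝ) :
    sq3 v = ‖planarPart v‖ ^ 2 + v 2 ^ 2 := by
  rw [sq3, planarPart_apply, Complex.sq_norm, normSq_mk]
  ring

theorem sq3_cross_nvec (v : Fin 3 → ℝ) (t : ℝ) :
    sq3 (crossProduct v (nvec t)) = (exp (-(t * I)) * planarPart v).im ^ 2 + v 2 ^ 2 := by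
  have him : (exp (-(t * I)) * planarPart v).im = v 1 * Real.cos t - v 0 * Real.sin t := by
    rw [show -(t * I) = ((-t : ℝ) : ℂ) * I by push_cast; ring, mul_im, exp_ofReal_mul_I_re,
      exp_ofReal_mul_I_im, planarPart_apply, Real.cos_neg, Real.sin_neg]
    ring
  rw [him, sq3, cross_apply]
  simp only [nvec, Matrix.cons_val_zero, Matrix.cons_val_one, Matrix.cons_val_two,
    Matrix.head_cons, Matrix.tail_cons]
  linear_combination (v 2) ^ 2 * Real.sin_sq_add_cos_sq t

/-- **Sharp Poincaré-type inequality in `H¹(S¹, ℝ³)`**: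
`∫ |u'|² + κ² ∫ |u × n|² ≥ c_κ² ∫ |u|²` for every `C¹` `2π`-periodic `u : ℝ → ℝ³`. -/
theorem sharp_poincare_inequality
    (κ : ℝ) (hκ : 0 < κ ^ 2)
    (u : ℝ → Fin 3 → ℝ)
    (hu : ContDiff ℝ 1 u)
    (hper : ∀ t : ℝ, u (t + 2 * π) = u t) :
    poincareConst κ * ∫ t in (-π)..π, sq3 (u t) ≤
      (∫ t in (-π)..π, sq3 (deriv u t))
        + κ ^ 2 * ∫ t in (-π)..π, sq3 (crossProduct (u t) (nvec t)) := by
  have hd : ∀ t, HasDerivAt u (deriv u t) t := fun t =>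
    (hu.differentiable one_ne_zero t).hasDerivAt
  have hc := hu.continuous
  have hc' := hu.continuous_deriv le_rfl
  have hz : Continuous fun t => planarPart (u t) := planarPart.continuous.comp hc
  have hz' : Continuous fun t => planarPart (deriv u t) := planarPart.continuous.comp hc'
  have hend : u π = u (-π) := by simpa [show -π + 2 * π = π by ring] using hper (-π)
  have horiz := planar_poincare hκ (z := fun t => planarPart (u t))
    (fun t _ => planarPart.hasFDerivAt.comp_hasDerivAt t (hd t))
    hz'.continuousOn (by simp only [hend])
  have hvert : poincareConst κ * ∫ t in (-π)..π, u t 2 ^ 2 ≤ κ ^ 2 * ∫ t in (-π)..π, u t 2 ^ 2 :=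
    mul_le_mul_of_nonneg_right (by linarith [poincareConst.lt_half_sq hκ])
      (intervalIntegral.integral_nonneg neg_pi_lt_pi.le fun t _ => sq_nonneg _)
  have hvert' : 0 ≤ ∫ t in (-π)..π, deriv u t 2 ^ 2 :=
    intervalIntegral.integral_nonneg neg_pi_lt_pi.le fun t _ => sq_nonneg _
  have hsplit : ∀ f g : ℝ → ℝ, Continuous f → Continuous g →
      ∫ t in (-π)..π, (f t + g t) = (∫ t in (-π)..π, f t) + ∫ t in (-π)..π, g t :=
    fun f g hf hg => intervalIntegral.integral_add (hf.intervalIntegrable _ _)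
      (hg.intervalIntegrable _ _)
  simp_rw [sq3_cross_nvec, sq3_eq_norm_sq_planarPart_add]
  rw [hsplit _ _ (by fun_prop) (by fun_prop), hsplit _ _ (by fun_prop) (by fun_prop),
    hsplit _ _ (by fun_prop) (by fun_prop)]
  linarith
end

section
/- Let n(t) := (cos t, sin t, 0) and fix κ² > 0. There exist constants C₁, C₂ > 0 such that for every C¹ 2π-periodic u : ℝ → ℝ³, C₁ ( ∫_{−π}^{π} |u(t)|² dt + ∫_{−π}^{π} |u'(t)|² dt ) ≤ ∫_{−π}^{π} |u'(t)|² dt + κ² ∫_{−π}^{π} |u(t) × n(t)|² dt ≤ C₂ ( ∫_{−π}^{π} |u(t)|² dt + ∫_{−π}^{π} |u'(t)|² dt ). In particular, u ↦ ( ∫ |u'|² + κ² ∫ |u × n|² )^{1/2} defines a norm equivalent to the standard H¹ norm. -/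
open Real Set MeasureTheory

/-!
Write `u` in the rotating frame `n(t)`, `τ(t) = n'(t)`, `e₃`. With `a = u ⬝ n` one has
`|u|² = a² + |u × n|²`, so only `∫ a²` has to be controlled. Since `a' = u' ⬝ n + u ⬝ τ`, a
Poincaré–Wirtinger inequality bounds `∫ a²` by `∫ |u'|² + ∫ |u × n|²` plus the squared mean of `a`,
and integrating by parts over a period gives `∫ u ⬝ n = ∫ u' ⬝ τ`, so the mean is controlled by
`∫ |u'|²` as well. The upper bound only needs `|u × n| ≤ |u|`.
-/

theorem integral_sq_sub_mean {g : ℝ → ℝ} (hg : Continuous g) (α β : ℝ) :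
    ∫ t in α..β, (g t - (∫ s in α..β, g s) / (β - α)) ^ 2 =
      (∫ t in α..β, g t ^ 2) - (∫ t in α..β, g t) ^ 2 / (β - α) := by
  set I := ∫ s in α..β, g s
  set m := I / (β - α)
  have hexpand : ∀ t, (g t - m) ^ 2 = g t ^ 2 - 2 * m * g t + m ^ 2 := fun t => by ring
  simp only [hexpand]
  rw [intervalIntegral.integral_add, intervalIntegral.integral_sub,
    intervalIntegral.integral_const_mul, intervalIntegral.integral_const, smul_eq_mul]
  · rcases eq_or_ne (β - α) 0 with h | h
    · simp [m, h]
    · simp only [m]; field_simp; ring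
  all_goals first
    | exact intervalIntegrable_const
    | exact Continuous.intervalIntegrable (by fun_prop) _ _

theorem sq_integral_le_mul_integral_sq {g : ℝ → ℝ} (hg : Continuous g) {α β : ℝ}
    (hαβ : α ≤ β) : (∫ t in α..β, g t) ^ 2 ≤ (β - α) * ∫ t in α..β, g t ^ 2 := by
  rcases hαβ.eq_or_lt with rfl | hlt
  · simp
  have hL : 0 < β - α := sub_pos.2 hlt
  have hvar : 0 ≤ ∫ t in α..β, (g t - (∫ s in α..β, g s) / (β - α)) ^ 2 :=
    intervalIntegral.integral_nonneg hαβ fun t _ => sq_nonneg _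
  rw [integral_sq_sub_mean hg, sub_nonneg, div_le_iff₀ hL] at hvar
  linarith

theorem abs_sub_le_integral_abs_deriv {f f' : ℝ → ℝ} (hf : ∀ t, HasDerivAt f (f' t) t)
    (hf' : Continuous f') {α β s t : ℝ} (hs : s ∈ Icc α β) (ht : t ∈ Icc α β) :
    |f t - f s| ≤ ∫ x in α..β, |f' x| := by
  rw [← intervalIntegral.integral_eq_sub_of_hasDerivAt (fun x _ => hf x)
    (hf'.intervalIntegrable _ _)]
  calc |∫ x in s..t, f' x| ≤ |(∫ x in s..t, |f' x|)| := by
        simpa only [Real.norm_eq_abs] using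
          intervalIntegral.norm_integral_le_abs_integral_norm (f := f') (a := s) (b := t)
    _ ≤ |(∫ x in α..β, |f' x|)| :=
        intervalIntegral.abs_integral_mono_interval
          (uIoc_subset_uIoc_of_uIcc_subset_uIcc
            (uIcc_subset_uIcc (Icc_subset_uIcc hs) (Icc_subset_uIcc ht)))
          (Filter.Eventually.of_forall fun x => abs_nonneg _) (hf'.abs.intervalIntegrable _ _)
    _ = (∫ x in α..β, |f' x|) :=
        abs_of_nonneg (intervalIntegral.integral_nonneg (hs.1.trans hs.2) fun x _ => abs_nonneg _)

theorem abs_sub_average_le_integral_abs_deriv {f f' : ℝ → ℝ} (hf : ∀ t, HasDerivAt f (f' t) t)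
    (hf' : Continuous f') {α β t : ℝ} (hαβ : α < β) (ht : t ∈ Icc α β) :
    |f t - (∫ s in α..β, f s) / (β - α)| ≤ ∫ x in α..β, |f' x| := by
  have hL : 0 < β - α := sub_pos.2 hαβ
  have hcont : Continuous f := continuous_iff_continuousAt.2 fun t => (hf t).continuousAt
  have hrepr : (β - α) * (f t - (∫ s in α..β, f s) / (β - α)) = ∫ s in α..β, (f t - f s) := by
    rw [intervalIntegral.integral_sub intervalIntegrable_const (hcont.intervalIntegrable _ _),
      intervalIntegral.integral_const, smul_eq_mul]
    field_simp
  have hbound : |∫ s in α..β, (f t - f s)| ≤ (∫ x in α..β, |f' x|) * |β - α| := by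
    refine intervalIntegral.norm_integral_le_of_norm_le_const (f := fun s => f t - f s)
      fun s hs => ?_
    rw [uIoc_of_le hαβ.le] at hs
    exact abs_sub_le_integral_abs_deriv hf hf' ⟨hs.1.le, hs.2⟩ ht
  rw [← hrepr, abs_mul, abs_of_pos hL, mul_comm] at hbound
  exact le_of_mul_le_mul_right hbound hL

/-- A Poincaré–Wirtinger inequality with the non-sharp constant `(β - α)²`. -/
theorem integral_sq_le_of_hasDerivAt {f f' : ℝ → ℝ} (hf : ∀ t, HasDerivAt f (f' t) t)
    (hf' : Continuous f') {α β : ℝ} (hαβ : α ≤ β) :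
    ∫ t in α..β, f t ^ 2 ≤
      (β - α) ^ 2 * (∫ t in α..β, f' t ^ 2) + (∫ t in α..β, f t) ^ 2 / (β - α) := by
  rcases hαβ.eq_or_lt with rfl | hlt
  · simp
  have hcont : Continuous f := continuous_iff_continuousAt.2 fun t => (hf t).continuousAt
  set M := ∫ x in α..β, |f' x|
  have hosc : ∫ t in α..β, (f t - (∫ s in α..β, f s) / (β - α)) ^ 2 ≤ (β - α) * M ^ 2 := by
    calc _ ≤ ∫ _ in α..β, M ^ 2 := by
          refine intervalIntegral.integral_mono_on hαβ
            (Continuous.intervalIntegrable (by fun_prop) _ _) intervalIntegrable_const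
            fun t ht => ?_
          obtain ⟨hlo, hhi⟩ := abs_le.1 (abs_sub_average_le_integral_abs_deriv hf hf' hlt ht)
          exact sq_le_sq' hlo hhi
      _ = (β - α) * M ^ 2 := by simp
  have hM : M ^ 2 ≤ (β - α) * ∫ t in α..β, f' t ^ 2 := by
    simpa only [sq_abs] using sq_integral_le_mul_integral_sq hf'.abs hαβ
  rw [integral_sq_sub_mean hcont] at hosc
  nlinarith [mul_le_mul_of_nonneg_left hM (sub_pos.2 hlt).le]

theorem HasDerivAt.dotProduct {ι : Type*} [Fintype ι] {u v : ℝ → ι → ℝ} {u' v' : ι → ℝ}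
    {t : ℝ} (hu : HasDerivAt u u' t) (hv : HasDerivAt v v' t) :
    HasDerivAt (fun s => u s ⬝ᵥ v s) (u' ⬝ᵥ v t + u t ⬝ᵥ v') t := by
  have h := HasDerivAt.fun_sum (u := Finset.univ) fun i _ =>
    (hasDerivAt_pi.1 hu i).mul (hasDerivAt_pi.1 hv i)
  simpa only [_root_.dotProduct, Pi.mul_apply, Finset.sum_add_distrib] using h

/-- The unit tangent `τ(t) = n'(t)` to the unit circle. -/
noncomputable def tvec (t : ℝ) : Fin 3 → ℝ := ![-Real.sin t, Real.cos t, 0]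

theorem hasDerivAt_nvec (t : ℝ) : HasDerivAt nvec (tvec t) t := by
  refine hasDerivAt_pi.2 fun i => ?_
  fin_cases i
  · simpa [nvec, tvec] using Real.hasDerivAt_cos t
  · simpa [nvec, tvec] using Real.hasDerivAt_sin t
  · simpa [nvec, tvec] using hasDerivAt_const t (0 : ℝ)

theorem hasDerivAt_tvec (t : ℝ) : HasDerivAt tvec (-nvec t) t := by
  refine hasDerivAt_pi.2 fun i => ?_
  fin_cases i
  · simpa [tvec, nvec] using (Real.hasDerivAt_sin t).fun_neg
  · simpa [tvec, nvec] using Real.hasDerivAt_cos t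
  · simpa [tvec, nvec] using hasDerivAt_const t (0 : ℝ)

@[fun_prop]
theorem continuous_nvec : Continuous nvec := by
  refine continuous_pi fun i => ?_
  fin_cases i <;> simp [nvec] <;> fun_prop

@[fun_prop]
theorem continuous_tvec : Continuous tvec := by
  refine continuous_pi fun i => ?_
  fin_cases i <;> simp [tvec] <;> fun_prop

@[fun_prop]
theorem continuous_sq3 : Continuous sq3 := by
  unfold sq3
  fun_prop

theorem sq3_eq_sq_dotProduct_nvec_add (v : Fin 3 → ℝ) (t : ℝ) :
    sq3 v = (v ⬝ᵥ nvec t) ^ 2 + sq3 (crossProduct v (nvec t)) := by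
  simp only [sq3, cross_apply, dotProduct, Fin.sum_univ_three, nvec, Matrix.cons_val_zero,
    Matrix.cons_val_one, Matrix.cons_val_two, Matrix.head_cons, Matrix.tail_cons]
  linear_combination (-(v 0 ^ 2) - v 1 ^ 2 - v 2 ^ 2) * Real.sin_sq_add_cos_sq t

theorem sq3_crossProduct_nvec (v : Fin 3 → ℝ) (t : ℝ) :
    sq3 (crossProduct v (nvec t)) = (v ⬝ᵥ tvec t) ^ 2 + v 2 ^ 2 := by
  simp only [sq3, cross_apply, dotProduct, Fin.sum_univ_three, nvec, tvec, Matrix.cons_val_zero,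
    Matrix.cons_val_one, Matrix.cons_val_two, Matrix.head_cons, Matrix.tail_cons]
  linear_combination v 2 ^ 2 * Real.sin_sq_add_cos_sq t

theorem sq3_nonneg (v : Fin 3 → ℝ) : 0 ≤ sq3 v := by
  unfold sq3
  positivity

theorem sq_dotProduct_tvec_le_sq3_crossProduct (v : Fin 3 → ℝ) (t : ℝ) :
    (v ⬝ᵥ tvec t) ^ 2 ≤ sq3 (crossProduct v (nvec t)) := by
  rw [sq3_crossProduct_nvec]
  nlinarith

theorem sq_dotProduct_nvec_le_sq3 (v : Fin 3 → ℝ) (t : ℝ) : (v ⬝ᵥ nvec t) ^ 2 ≤ sq3 v := by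
  rw [sq3_eq_sq_dotProduct_nvec_add v t]
  nlinarith [sq_dotProduct_tvec_le_sq3_crossProduct v t]

theorem sq_dotProduct_tvec_le_sq3 (v : Fin 3 → ℝ) (t : ℝ) : (v ⬝ᵥ tvec t) ^ 2 ≤ sq3 v := by
  rw [sq3_eq_sq_dotProduct_nvec_add v t]
  nlinarith [sq_dotProduct_tvec_le_sq3_crossProduct v t]

theorem sq3_crossProduct_nvec_le (v : Fin 3 → ℝ) (t : ℝ) :
    sq3 (crossProduct v (nvec t)) ≤ sq3 v := by
  rw [sq3_eq_sq_dotProduct_nvec_add v t]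
  nlinarith

/-- Integration by parts against `n = -τ'`; the boundary term vanishes by periodicity. -/
theorem integral_dotProduct_nvec_eq {u u' : ℝ → Fin 3 → ℝ} (hu : ∀ t, HasDerivAt u (u' t) t)
    (hu' : Continuous u') (hper : u π = u (-π)) :
    ∫ t in (-π)..π, u t ⬝ᵥ nvec t = ∫ t in (-π)..π, u' t ⬝ᵥ tvec t := by
  have hcont : Continuous u := continuous_iff_continuousAt.2 fun t => (hu t).continuousAt
  have hftc := intervalIntegral.integral_eq_sub_of_hasDerivAt
    (fun t _ => (hu t).dotProduct (hasDerivAt_tvec t)) (a := -π) (b := π)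
    (Continuous.intervalIntegrable (by fun_prop) _ _)
  simp only [dotProduct_neg] at hftc
  rw [hper, show tvec π = tvec (-π) by simp [tvec], sub_self, intervalIntegral.integral_add
    (Continuous.intervalIntegrable (by fun_prop) _ _)
    (Continuous.intervalIntegrable (by fun_prop) _ _), intervalIntegral.integral_neg] at hftc
  linarith

theorem continuous_sq3_crossProduct_nvec {u : ℝ → Fin 3 → ℝ} (hu : Continuous u) :
    Continuous fun t => sq3 (crossProduct (u t) (nvec t)) := by
  simp only [sq3_crossProduct_nvec]
  fun_prop

theorem integral_sq3_crossProduct_nvec_le {u : ℝ → Fin 3 → ℝ} (hu : Continuous u) :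
    ∫ t in (-π)..π, sq3 (crossProduct (u t) (nvec t)) ≤ ∫ t in (-π)..π, sq3 (u t) :=
  intervalIntegral.integral_mono_on (by linarith [pi_pos])
    ((continuous_sq3_crossProduct_nvec hu).intervalIntegrable _ _)
    (Continuous.intervalIntegrable (by fun_prop) _ _) fun t _ => sq3_crossProduct_nvec_le _ _

theorem integral_sq3_le {u u' : ℝ → Fin 3 → ℝ} (hu : ∀ t, HasDerivAt u (u' t) t)
    (hu' : Continuous u') (hper : u π = u (-π)) :
    ∫ t in (-π)..π, sq3 (u t) ≤ (8 * π ^ 2 + 1) *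
      ((∫ t in (-π)..π, sq3 (u' t)) + ∫ t in (-π)..π, sq3 (crossProduct (u t) (nvec t))) := by
  have hcont : Continuous u := continuous_iff_continuousAt.2 fun t => (hu t).continuousAt
  have hcX := continuous_sq3_crossProduct_nvec hcont
  have hπ : -π ≤ π := by linarith [pi_pos]
  have hlen : π - -π = 2 * π := by ring
  set D := ∫ t in (-π)..π, sq3 (u' t)
  set X := ∫ t in (-π)..π, sq3 (crossProduct (u t) (nvec t))
  have hpoinc := integral_sq_le_of_hasDerivAt (fun t => (hu t).dotProduct (hasDerivAt_nvec t))
    (by fun_prop) hπ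
  rw [hlen] at hpoinc
  have hderiv : ∫ t in (-π)..π, (u' t ⬝ᵥ nvec t + u t ⬝ᵥ tvec t) ^ 2 ≤ 2 * D + 2 * X := by
    calc _ ≤ ∫ t in (-π)..π, (2 * sq3 (u' t) + 2 * sq3 (crossProduct (u t) (nvec t))) := by
          refine intervalIntegral.integral_mono_on hπ
            (Continuous.intervalIntegrable (by fun_prop) _ _)
            (Continuous.intervalIntegrable (by fun_prop) _ _) fun t _ => ?_
          nlinarith [sq_dotProduct_nvec_le_sq3 (u' t) t,
            sq_dotProduct_tvec_le_sq3_crossProduct (u t) t,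
            sq_nonneg (u' t ⬝ᵥ nvec t - u t ⬝ᵥ tvec t)]
      _ = 2 * D + 2 * X := by
          rw [intervalIntegral.integral_add (Continuous.intervalIntegrable (by fun_prop) _ _)
            (Continuous.intervalIntegrable (by fun_prop) _ _),
            intervalIntegral.integral_const_mul, intervalIntegral.integral_const_mul]
  have hmean : (∫ t in (-π)..π, u t ⬝ᵥ nvec t) ^ 2 ≤ 2 * π * D := by
    rw [integral_dotProduct_nvec_eq hu hu' hper, ← hlen]
    refine (sq_integral_le_mul_integral_sq (by fun_prop) hπ).trans ?_
    gcongr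
    exact intervalIntegral.integral_mono_on hπ (Continuous.intervalIntegrable (by fun_prop) _ _)
      (Continuous.intervalIntegrable (by fun_prop) _ _) fun t _ => sq_dotProduct_tvec_le_sq3 _ _
  have hsplit : ∫ t in (-π)..π, sq3 (u t) = (∫ t in (-π)..π, (u t ⬝ᵥ nvec t) ^ 2) + X := by
    rw [← intervalIntegral.integral_add (f := fun t => (u t ⬝ᵥ nvec t) ^ 2)
      (Continuous.intervalIntegrable (by fun_prop) _ _) (hcX.intervalIntegrable _ _)]
    exact intervalIntegral.integral_congr fun t _ => sq3_eq_sq_dotProduct_nvec_add (u t) t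
  have hmean' : (∫ t in (-π)..π, u t ⬝ᵥ nvec t) ^ 2 / (2 * π) ≤ D := by
    rw [div_le_iff₀ (by positivity)]
    linarith
  have hderiv' := mul_le_mul_of_nonneg_left hderiv (sq_nonneg (2 * π))
  rw [hsplit]
  linarith

/-- **Equivalence of norms**: for every `κ² > 0` there are constants
`C₁, C₂ > 0` such that for all `C¹` `2π`-periodic `u : ℝ → ℝ³`,
`C₁ ‖u‖²_{H¹} ≤ ∫ |u'|² + κ² ∫ |u × n|² ≤ C₂ ‖u‖²_{H¹}`; i.e., the energy
defines a norm equivalent to the standard `H¹` norm. -/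
theorem energy_norm_equivalence (κ : ℝ) (hκ : 0 < κ ^ 2) :
    ∃ C₁ > (0 : ℝ), ∃ C₂ > (0 : ℝ),
      ∀ u : ℝ → Fin 3 → ℝ, ContDiff ℝ 1 u → (∀ t : ℝ, u (t + 2 * π) = u t) →
        C₁ * ((∫ t in (-π)..π, sq3 (u t)) + ∫ t in (-π)..π, sq3 (deriv u t)) ≤
          (∫ t in (-π)..π, sq3 (deriv u t))
            + κ ^ 2 * (∫ t in (-π)..π, sq3 (crossProduct (u t) (nvec t))) ∧
        (∫ t in (-π)..π, sq3 (deriv u t))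
            + κ ^ 2 * (∫ t in (-π)..π, sq3 (crossProduct (u t) (nvec t))) ≤
          C₂ * ((∫ t in (-π)..π, sq3 (u t)) + ∫ t in (-π)..π, sq3 (deriv u t)) := by
  refine ⟨min 1 (κ ^ 2) / (8 * π ^ 2 + 2), by positivity, max 1 (κ ^ 2), by positivity,
    fun u hu hper => ?_⟩
  have hderiv : ∀ t, HasDerivAt u (deriv u t) t := fun t =>
    (hu.differentiable one_ne_zero t).hasDerivAt
  have hper' : u π = u (-π) := by simpa [show -π + 2 * π = π by ring] using hper (-π)
  have hπ : -π ≤ π := by linarith [pi_pos]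
  set S := ∫ t in (-π)..π, sq3 (u t)
  set D := ∫ t in (-π)..π, sq3 (deriv u t)
  set X := ∫ t in (-π)..π, sq3 (crossProduct (u t) (nvec t))
  have hS : S ≤ (8 * π ^ 2 + 1) * (D + X) :=
    integral_sq3_le hderiv (hu.continuous_deriv le_rfl) hper'
  have hXS : X ≤ S := integral_sq3_crossProduct_nvec_le hu.continuous
  have hD : 0 ≤ D := intervalIntegral.integral_nonneg hπ fun t _ => sq3_nonneg _
  have hX : 0 ≤ X := intervalIntegral.integral_nonneg hπ fun t _ => sq3_nonneg _
  have hmin : min 1 (κ ^ 2) * (D + X) ≤ D + κ ^ 2 * X := by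
    nlinarith [min_le_left 1 (κ ^ 2), min_le_right 1 (κ ^ 2)]
  constructor
  · calc _ ≤ min 1 (κ ^ 2) / (8 * π ^ 2 + 2) * ((8 * π ^ 2 + 2) * (D + X)) := by
          gcongr
          linarith
      _ = min 1 (κ ^ 2) * (D + X) := by field_simp
      _ ≤ D + κ ^ 2 * X := hmin
  · nlinarith [le_max_left 1 (κ ^ 2), le_max_right 1 (κ ^ 2)]
end

section
/- Fix κ² > 0. For a C¹ function θ : [−π, π] → ℝ with θ(π) − θ(−π) = 2πj for some integer j, define E(θ) := ∫_{−π}^{π} ( |θ'(t) + 1|² + κ² sin²θ(t) ) dt. If θ minimizes E over all C¹ functions on [−π, π] whose endpoint difference is an integer multiple of 2π, then θ(π) − θ(−π) ∈ {−2π, 0}. Equivalently, every global in-plane minimizer m_⊥ has winding degree 0 or 1. -/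
/-!
By Cauchy–Schwarz, a lift `θ` of winding `θ(π) − θ(−π) = 2πj` has exchange energy
`∫ (θ' + 1)² ≥ 2π (j + 1)²`, while the constant lift `θ ≡ 0` has total energy `2π`. A minimizer
therefore has `(j + 1)² ≤ 1`, i.e. `j ∈ {−2, −1, 0}`. For `j = −2` the exchange energy alone
already reaches `2π`, so `∫ sin²θ = 0`; then `θ` is continuous with values in `πℤ`, hence
constant, contradicting `j = −2`.
-/

open Real Set MeasureTheory

/-- The in-plane energy `E(θ) = ∫_{−π}^{π} (|θ' + 1|² + κ² sin²θ) dt` in the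
lifting representation `m_⊥ = sin θ · τ + cos θ · n`. -/
noncomputable def inplaneE (κ : ℝ) (θ : ℝ → ℝ) : ℝ :=
  ∫ t in (-π)..π, ((deriv θ t + 1) ^ 2 + κ ^ 2 * Real.sin (θ t) ^ 2)

theorem sq_integral_le_mul_integral_sq_s15 {f : ℝ → ℝ} {a b : ℝ} (hab : a ≤ b)
    (hf : IntervalIntegrable f volume a b)
    (hf2 : IntervalIntegrable (fun t => f t ^ 2) volume a b) :
    (∫ t in a..b, f t) ^ 2 ≤ (b - a) * ∫ t in a..b, f t ^ 2 := by
  rcases hab.eq_or_lt with rfl | hab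
  · simp
  set I := ∫ t in a..b, f t
  have hexpand : ∫ t in a..b, ((b - a) * f t - I) ^ 2
      = (b - a) * ((b - a) * ∫ t in a..b, f t ^ 2) - (b - a) * I ^ 2 := by
    have hpt : ∀ t, ((b - a) * f t - I) ^ 2
        = (b - a) ^ 2 * f t ^ 2 - 2 * (b - a) * I * f t + I ^ 2 := fun t => by ring
    simp_rw [hpt]
    rw [intervalIntegral.integral_add ((hf2.const_mul _).sub (hf.const_mul _))
        intervalIntegrable_const,
      intervalIntegral.integral_sub (hf2.const_mul _) (hf.const_mul _),
      intervalIntegral.integral_const_mul, intervalIntegral.integral_const_mul,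
      intervalIntegral.integral_const, smul_eq_mul]
    ring
  have hnonneg : 0 ≤ ∫ t in a..b, ((b - a) * f t - I) ^ 2 :=
    intervalIntegral.integral_nonneg hab.le fun t _ => sq_nonneg _
  rw [hexpand] at hnonneg
  nlinarith

theorem integral_deriv_add_const {θ : ℝ → ℝ} (hθ : ContDiff ℝ 1 θ) (a b c : ℝ) :
    ∫ t in a..b, (deriv θ t + c) = θ b - θ a + (b - a) * c := by
  have hθ' := hθ.continuous_deriv le_rfl
  rw [intervalIntegral.integral_add (hθ'.intervalIntegrable _ _) intervalIntegrable_const,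
    intervalIntegral.integral_deriv_eq_sub
      (fun x _ => (hθ.differentiable one_ne_zero).differentiableAt) (hθ'.intervalIntegrable _ _),
    intervalIntegral.integral_const, smul_eq_mul]

theorem eqOn_zero_of_integral_eq_zero {f : ℝ → ℝ} {a b : ℝ} (hab : a < b)
    (hf : ContinuousOn f (Icc a b)) (hf0 : ∀ t ∈ Icc a b, 0 ≤ f t)
    (hint : ∫ t in a..b, f t = 0) : EqOn f 0 (Icc a b) := by
  intro t ht
  by_contra hne
  have hpos := intervalIntegral.integral_pos hab hf (fun s hs => hf0 s (Ioc_subset_Icc_self hs))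
    ⟨t, ht, (hf0 t ht).lt_of_ne' hne⟩
  exact hpos.ne' hint

theorem eq_of_forall_sin_eq_zero {θ : ℝ → ℝ} {a b : ℝ} (hab : a ≤ b)
    (hθ : ContinuousOn θ (Icc a b)) (hsin : ∀ t ∈ Icc a b, sin (θ t) = 0) : θ a = θ b := by
  refine isPreconnected_Icc.constant_of_mapsTo
    ((SetLike.isDiscrete_iff_discreteTopology (s := AddSubgroup.zmultiples π)).mpr inferInstance)
    hθ (fun t ht => ?_) (left_mem_Icc.mpr hab) (right_mem_Icc.mpr hab)
  obtain ⟨n, hn⟩ := sin_eq_zero_iff.mp (hsin t ht)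
  exact AddSubgroup.mem_zmultiples_iff.mpr ⟨n, by rw [← hn, zsmul_eq_mul]⟩

theorem eq_of_integral_sin_sq_eq_zero {θ : ℝ → ℝ} {a b : ℝ} (hab : a < b)
    (hθ : ContinuousOn θ (Icc a b)) (hint : ∫ t in a..b, sin (θ t) ^ 2 = 0) : θ a = θ b := by
  have hzero := eqOn_zero_of_integral_eq_zero hab (continuous_sin.comp_continuousOn hθ |>.pow 2)
    (fun t _ => sq_nonneg _) hint
  exact eq_of_forall_sin_eq_zero hab.le hθ fun t ht => pow_eq_zero_iff two_ne_zero |>.mp (hzero ht)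

theorem inplaneE_eq {κ : ℝ} {θ : ℝ → ℝ} (hθ : ContDiff ℝ 1 θ) :
    inplaneE κ θ = (∫ t in (-π)..π, (deriv θ t + 1) ^ 2)
      + κ ^ 2 * ∫ t in (-π)..π, sin (θ t) ^ 2 := by
  have hθ' := hθ.continuous_deriv le_rfl
  have hθc := hθ.continuous
  rw [inplaneE, ← intervalIntegral.integral_const_mul,
    intervalIntegral.integral_add (Continuous.intervalIntegrable (by fun_prop) _ _)
      (Continuous.intervalIntegrable (by fun_prop) _ _)]

theorem inplaneE_const (κ c : ℝ) (hc : sin c = 0) : inplaneE κ (fun _ => c) = 2 * π := by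
  simp [inplaneE, hc, two_mul]

theorem two_pi_mul_add_one_sq_le_integral {θ : ℝ → ℝ} (hθ : ContDiff ℝ 1 θ) {j : ℝ}
    (hj : θ π - θ (-π) = 2 * π * j) :
    2 * π * (j + 1) ^ 2 ≤ ∫ t in (-π)..π, (deriv θ t + 1) ^ 2 := by
  have hf : Continuous fun t => deriv θ t + 1 := (hθ.continuous_deriv le_rfl).add continuous_const
  have hCS := sq_integral_le_mul_integral_sq_s15 (neg_le_self pi_pos.le)
    (hf.intervalIntegrable _ _) ((hf.pow 2).intervalIntegrable _ _)
  rw [integral_deriv_add_const hθ, hj] at hCS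
  nlinarith [pi_pos]

/-- **Global in-plane minimizers have winding degree `0` or `1`**: if `θ`
minimizes the in-plane energy among all `C¹` functions whose endpoint difference
`θ(π) − θ(−π)` is an integer multiple of `2π`, then `θ(π) − θ(−π) ∈ {−2π, 0}`. -/
theorem inplane_minimizer_degree_zero_or_one
    (κ : ℝ) (hκ : 0 < κ ^ 2)
    (θ : ℝ → ℝ) (hθ : ContDiff ℝ 1 θ)
    (hj : ∃ j : ℤ, θ π - θ (-π) = 2 * π * j)
    (hmin : ∀ ψ : ℝ → ℝ, ContDiff ℝ 1 ψ →
      (∃ j : ℤ, ψ π - ψ (-π) = 2 * π * j) → inplaneE κ θ ≤ inplaneE κ ψ) :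
    θ π - θ (-π) = -(2 * π) ∨ θ π - θ (-π) = 0 := by
  obtain ⟨j, hj⟩ := hj
  have hlower := two_pi_mul_add_one_sq_le_integral hθ hj
  have hupper : inplaneE κ θ ≤ 2 * π :=
    inplaneE_const κ 0 sin_zero ▸ hmin _ contDiff_const ⟨0, by simp⟩
  rw [inplaneE_eq hθ] at hupper
  have hsin_nonneg : 0 ≤ ∫ t in (-π)..π, sin (θ t) ^ 2 :=
    intervalIntegral.integral_nonneg (neg_le_self pi_pos.le) fun t _ => sq_nonneg _
  have hj_sq : (j + 1) ^ 2 ≤ 1 := by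
    have : ((j + 1 : ℤ) : ℝ) ^ 2 ≤ 1 := by push_cast; nlinarith [pi_pos]
    exact_mod_cast this
  obtain rfl | rfl | rfl : j = -2 ∨ j = -1 ∨ j = 0 := by
    have := abs_le.mp (sq_le_one_iff_abs_le_one _ |>.mp hj_sq)
    omega
  · have hsin_int : ∫ t in (-π)..π, sin (θ t) ^ 2 = 0 := by
      push_cast at hlower
      nlinarith [pi_pos]
    have := eq_of_integral_sin_sq_eq_zero (neg_lt_self pi_pos) hθ.continuous.continuousOn hsin_int
    push_cast at hj
    nlinarith [pi_pos]
  · exact Or.inl (by simpa using hj)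
  · exact Or.inr (by simpa using hj)
end
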